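/- Let A, B : ℝ⁴ → ℂ⁴ be twice continuously differentiable solutions of the source-free Maxwell equation ∂^μ(∂_μ A_ν − ∂_ν A_μ) = 0 and ∂^μ(∂_μ B_ν − ∂_ν B_μ) = 0. Define the current j_ν = −i[A_μ* ∂_ν B^μ − A_ν* ∂_μ B^μ − (∂_ν A_μ*) B^μ + (∂^μ A_μ*) B_ν]. Then ∂^ν j_ν = 0 identically on ℝ⁴. -/

import Mathlib

/-- Partial derivative in direction `μ` of a function on ℝ⁴. -/
noncomputable def pd (f : (Fin 4 → ℝ) → ℂ) (μ : Fin 4) : (Fin 4 → ℝ) → ℂ :=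
  fun x => fderiv ℝ f x (Pi.single μ 1)

/-- Metric signs of the Minkowski metric diag(1,−1,−1,−1), as complex numbers. -/
def eta (μ : Fin 4) : ℂ := if μ = 0 then 1 else -1

/-- The Gupta–Bleuler current
`j_ν = −i[A_μ* ∂_ν B^μ − A_ν* ∂_μ B^μ − (∂_ν A_μ*) B^μ + (∂^μ A_μ*) B_ν]`. -/
noncomputable def gbCurrent (A B : (Fin 4 → ℝ) → Fin 4 → ℂ) (ν : Fin 4)
    (x : Fin 4 → ℝ) : ℂ :=
  -Complex.I *
    ((∑ μ : Fin 4, eta μ * (starRingEnd ℂ) (A x μ) * pd (fun y => B y μ) ν x)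
      - (starRingEnd ℂ) (A x ν) * (∑ μ : Fin 4, eta μ * pd (fun y => B y μ) μ x)
      - (∑ μ : Fin 4, eta μ * pd (fun y => (starRingEnd ℂ) (A y μ)) ν x * B x μ)
      + (∑ μ : Fin 4, eta μ * pd (fun y => (starRingEnd ℂ) (A y μ)) μ x) * B x ν)

open Finset

section pd

variable {f g : (Fin 4 → ℝ) → ℂ} {x : Fin 4 → ℝ} {μ ν : Fin 4}

lemma pd_add (hf : DifferentiableAt ℝ f x) (hg : DifferentiableAt ℝ g x) :
    pd (fun y => f y + g y) μ x = pd f μ x + pd g μ x := by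
  simp [pd, fderiv_fun_add hf hg]

lemma pd_sub (hf : DifferentiableAt ℝ f x) (hg : DifferentiableAt ℝ g x) :
    pd (fun y => f y - g y) μ x = pd f μ x - pd g μ x := by
  simp [pd, fderiv_fun_sub hf hg]

lemma pd_mul (hf : DifferentiableAt ℝ f x) (hg : DifferentiableAt ℝ g x) :
    pd (fun y => f y * g y) μ x = pd f μ x * g x + f x * pd g μ x := by
  simp only [pd, fderiv_fun_mul hf hg, add_apply, smul_apply, smul_eq_mul]
  ring

lemma pd_const_mul (c : ℂ) (hf : DifferentiableAt ℝ f x) :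
    pd (fun y => c * f y) μ x = c * pd f μ x := by
  simp [pd, fderiv_const_mul hf c]

lemma pd_sum {ι : Type*} (s : Finset ι) {F : ι → (Fin 4 → ℝ) → ℂ}
    (hF : ∀ i ∈ s, DifferentiableAt ℝ (F i) x) :
    pd (fun y => ∑ i ∈ s, F i y) μ x = ∑ i ∈ s, pd (F i) μ x := by
  simp [pd, fderiv_fun_sum hF]

lemma pd_conj (f : (Fin 4 → ℝ) → ℂ) (μ : Fin 4) :
    pd (fun y => (starRingEnd ℂ) (f y)) μ = fun x => (starRingEnd ℂ) (pd f μ x) := by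
  funext x
  exact congrArg (· (Pi.single μ 1)) (Complex.conjCLE.comp_fderiv (f := f) (x := x))

lemma ContDiff.pd {n : WithTop ℕ∞} (hf : ContDiff ℝ (n + 1) f) (μ : Fin 4) :
    ContDiff ℝ n (pd f μ) :=
  (hf.fderiv_right le_rfl).clm_apply contDiff_const

lemma pd_pd_comm (hf : ContDiff ℝ 2 f) (μ ν : Fin 4) (x : Fin 4 → ℝ) :
    pd (pd f μ) ν x = pd (pd f ν) μ x := by
  have hd : DifferentiableAt ℝ (fderiv ℝ f) x :=
    ((hf.fderiv_right (m := 1) le_rfl).differentiable one_ne_zero).differentiableAt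
  have h : ∀ σ τ : Fin 4, pd (pd f σ) τ x
      = fderiv ℝ (fderiv ℝ f) x (Pi.single τ 1) (Pi.single σ 1) := fun σ τ => by
    rw [pd, show pd f σ = fun y => fderiv ℝ f y (Pi.single σ 1) from rfl,
      fderiv_clm_apply hd (differentiableAt_const _)]
    simp
  rw [h, h, (hf.contDiffAt.isSymmSndFDerivAt (by simp)).eq]

end pd

noncomputable def maxwell (a : (Fin 4 → ℝ) → Fin 4 → ℂ) (ν : Fin 4) (x : Fin 4 → ℝ) : ℂ :=
  ∑ μ : Fin 4, eta μ * (pd (pd (fun y => a y ν) μ) μ x - pd (pd (fun y => a y μ) ν) μ x)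

/-- `gbCurrent A B` is `pairCurrent A* B` by definition: conjugation plays no role in the
divergence identity. -/
noncomputable def pairCurrent (a b : (Fin 4 → ℝ) → Fin 4 → ℂ) (ν : Fin 4)
    (x : Fin 4 → ℝ) : ℂ :=
  -Complex.I *
    ((∑ μ : Fin 4, eta μ * a x μ * pd (fun y => b y μ) ν x)
      - a x ν * (∑ μ : Fin 4, eta μ * pd (fun y => b y μ) μ x)
      - (∑ μ : Fin 4, eta μ * pd (fun y => a y μ) ν x * b x μ)
      + (∑ μ : Fin 4, eta μ * pd (fun y => a y μ) μ x) * b x ν)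

section current

variable {a b : (Fin 4 → ℝ) → Fin 4 → ℂ}

lemma pd_divergence (hb : ∀ μ, ContDiff ℝ 2 (fun y => b y μ)) (ν : Fin 4) (x : Fin 4 → ℝ) :
    pd (fun y => ∑ μ : Fin 4, eta μ * pd (fun z => b z μ) μ y) ν x
      = ∑ μ : Fin 4, eta μ * pd (pd (fun z => b z μ) ν) μ x := by
  have dpb : ∀ μ, Differentiable ℝ (pd (fun z => b z μ) μ) := fun μ =>
    ((hb μ).pd (n := 1) μ).differentiable one_ne_zero
  rw [pd_sum _ fun μ _ => ((dpb μ).const_mul _).differentiableAt]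
  refine sum_congr rfl fun μ _ => ?_
  rw [pd_const_mul _ (dpb μ).differentiableAt, pd_pd_comm (hb μ)]

/-- The first-derivative cross terms cancel, and after commuting second derivatives what is left
pairs each field with the Maxwell expression of the other. -/
lemma divergence_pairCurrent (ha : ∀ μ, ContDiff ℝ 2 (fun y => a y μ))
    (hb : ∀ μ, ContDiff ℝ 2 (fun y => b y μ)) (x : Fin 4 → ℝ) :
    ∑ ν : Fin 4, eta ν * pd (pairCurrent a b ν) ν x
      = -Complex.I * ∑ μ : Fin 4, eta μ * (a x μ * maxwell b μ x - maxwell a μ x * b x μ) := by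
  have da : ∀ μ, Differentiable ℝ (fun y => a y μ) := fun μ =>
    (ha μ).differentiable two_ne_zero
  have db : ∀ μ, Differentiable ℝ (fun y => b y μ) := fun μ =>
    (hb μ).differentiable two_ne_zero
  have dpa : ∀ μ σ, Differentiable ℝ (pd (fun y => a y μ) σ) := fun μ σ =>
    ((ha μ).pd (n := 1) σ).differentiable one_ne_zero
  have dpb : ∀ μ σ, Differentiable ℝ (pd (fun y => b y μ) σ) := fun μ σ =>
    ((hb μ).pd (n := 1) σ).differentiable one_ne_zero
  unfold pairCurrent maxwell
  simp (disch := fun_prop) only [pd_const_mul, pd_add, pd_sub, pd_mul, pd_sum,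
    pd_divergence ha, pd_divergence hb]
  simp only [Fin.sum_univ_four]
  ring

end current

lemma maxwell_conj (a : (Fin 4 → ℝ) → Fin 4 → ℂ) (ν : Fin 4) (x : Fin 4 → ℝ) :
    maxwell (fun y μ => (starRingEnd ℂ) (a y μ)) ν x = (starRingEnd ℂ) (maxwell a ν x) := by
  simp [maxwell, pd_conj, eta, apply_ite]

/-- For C² solutions `A`, `B` of the source-free Maxwell equation
`∂^μ(∂_μ A_ν − ∂_ν A_μ) = 0`, the current `j_ν` is divergence-free:
`∂^ν j_ν = 0` on all of ℝ⁴. -/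
theorem gb_current_divergence_free
    (A B : (Fin 4 → ℝ) → Fin 4 → ℂ)
    (hA : ∀ ν : Fin 4, ContDiff ℝ 2 (fun x => A x ν))
    (hB : ∀ ν : Fin 4, ContDiff ℝ 2 (fun x => B x ν))
    (hMaxA : ∀ (x : Fin 4 → ℝ) (ν : Fin 4),
      ∑ μ : Fin 4, eta μ *
        (pd (pd (fun y => A y ν) μ) μ x - pd (pd (fun y => A y μ) ν) μ x) = 0)
    (hMaxB : ∀ (x : Fin 4 → ℝ) (ν : Fin 4),
      ∑ μ : Fin 4, eta μ *
        (pd (pd (fun y => B y ν) μ) μ x - pd (pd (fun y => B y μ) ν) μ x) = 0) :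
    ∀ x : Fin 4 → ℝ,
      ∑ ν : Fin 4, eta ν * pd (gbCurrent A B ν) ν x = 0 := by
  intro x
  have hA_conj : ∀ ν, ContDiff ℝ 2 (fun y => (starRingEnd ℂ) (A y ν)) :=
    fun ν => Complex.conjCLE.contDiff.comp (hA ν)
  have hMaxA_conj : ∀ ν, maxwell (fun y μ => (starRingEnd ℂ) (A y μ)) ν x = 0 := fun ν => by
    rw [maxwell_conj, maxwell, hMaxA x ν, map_zero]
  have hMaxB_x : ∀ ν, maxwell B ν x = 0 := hMaxB x
  rw [show gbCurrent A B = pairCurrent _ B from rfl, divergence_pairCurrent hA_conj hB]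
  simp [hMaxA_conj, hMaxB_x]
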